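/- The function K(x,y) equal to the quotient N(x,y)/(4(e^x+1)²(e^y+1)²(3e^{x+y}+e^{2x+y}+e^{x+2y}−1)), where N is the polynomial 5+6e^x+3e^{2x}+6e^y+3e^{2y}+3e^{x+y}+45e^{2(x+y)}+19e^{3(x+y)}+11e^{2x+y}+9e^{3x+y}+3e^{4x+y}+11e^{x+2y}+33e^{3x+2y}+8e^{4x+2y}+9e^{x+3y}+33e^{2x+3y}+3e^{4x+3y}+3e^{x+4y}+8e^{2x+4y}+3e^{3x+4y}, is strictly positive for all x, y ≥ 0, and K(x,x) → 3/4 as x → ∞. -/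
import Mathlib


open Real

noncomputable def Kbb (x y : ℝ) : ℝ :=
  (5 + 6 * exp x + 3 * exp (2 * x) + 6 * exp y + 3 * exp (2 * y) + 3 * exp (x + y) +
      45 * exp (2 * (x + y)) + 19 * exp (3 * (x + y)) + 11 * exp (2 * x + y) +
      9 * exp (3 * x + y) + 3 * exp (4 * x + y) + 11 * exp (x + 2 * y) +
      33 * exp (3 * x + 2 * y) + 8 * exp (4 * x + 2 * y) + 9 * exp (x + 3 * y) +
      33 * exp (2 * x + 3 * y) + 3 * exp (4 * x + 3 * y) + 3 * exp (x + 4 * y) +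
      8 * exp (2 * x + 4 * y) + 3 * exp (3 * x + 4 * y)) /
    (4 * (exp x + 1) ^ 2 * (exp y + 1) ^ 2 *
      (3 * exp (x + y) + exp (2 * x + y) + exp (x + 2 * y) - 1))

noncomputable def Fbb (u : ℝ) : ℝ :=
  (6 + 35 * u + 72 * u ^ 2 + 63 * u ^ 3 + 22 * u ^ 4 + 9 * u ^ 5 + 12 * u ^ 6 + 5 * u ^ 7) /
    (4 * (1 + u) ^ 4 * (2 + 3 * u - u ^ 3))

lemma Kbb_diag (x : ℝ) (hx : 0 ≤ x) : Kbb x x = Fbb (exp (-x)) := by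
  have hu : (0:ℝ) < exp x := exp_pos x
  have hu1 : (1:ℝ) ≤ exp x := one_le_exp hx
  unfold Kbb Fbb
  rw [show (2:ℝ) * (x + x) = ((4:ℕ):ℝ) * x by push_cast; ring]
  rw [show (3:ℝ) * (x + x) = ((6:ℕ):ℝ) * x by push_cast; ring]
  rw [show (4:ℝ) * x + x = ((5:ℕ):ℝ) * x by push_cast; ring]
  rw [show (3:ℝ) * x + x = ((4:ℕ):ℝ) * x by push_cast; ring]
  rw [show (2:ℝ) * x + x = ((3:ℕ):ℝ) * x by push_cast; ring]
  rw [show x + (4:ℝ) * x = ((5:ℕ):ℝ) * x by push_cast; ring]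
  rw [show x + (3:ℝ) * x = ((4:ℕ):ℝ) * x by push_cast; ring]
  rw [show x + (2:ℝ) * x = ((3:ℕ):ℝ) * x by push_cast; ring]
  rw [show (4:ℝ) * x + 3 * x = ((7:ℕ):ℝ) * x by push_cast; ring]
  rw [show (3:ℝ) * x + 4 * x = ((7:ℕ):ℝ) * x by push_cast; ring]
  rw [show (4:ℝ) * x + 2 * x = ((6:ℕ):ℝ) * x by push_cast; ring]
  rw [show (2:ℝ) * x + 4 * x = ((6:ℕ):ℝ) * x by push_cast; ring]
  rw [show (3:ℝ) * x + 2 * x = ((5:ℕ):ℝ) * x by push_cast; ring]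
  rw [show (2:ℝ) * x + 3 * x = ((5:ℕ):ℝ) * x by push_cast; ring]
  rw [show x + x = ((2:ℕ):ℝ) * x by push_cast; ring]
  rw [show (2:ℝ) * x = ((2:ℕ):ℝ) * x by push_cast; ring]
  simp only [Real.exp_nat_mul, Real.exp_neg]
  set u := exp x with hudef
  have hv : (0:ℝ) < u⁻¹ := by positivity
  have hv1 : u⁻¹ ≤ 1 := inv_le_one_of_one_le₀ hu1
  have hA : 4 * (u + 1) ^ 2 * (u + 1) ^ 2 * (3 * u ^ 2 + (u ^ 3 + u ^ 3) - 1) ≠ 0 := by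
    have : (0:ℝ) < 3 * u ^ 2 + (u ^ 3 + u ^ 3) - 1 := by nlinarith
    positivity
  have hB : 4 * (1 + u⁻¹) ^ 4 * (2 + 3 * u⁻¹ - u⁻¹ ^ 3) ≠ 0 := by
    have h3 : u⁻¹ ^ 3 ≤ 1 := pow_le_one₀ (le_of_lt hv) hv1
    have : (0:ℝ) < 2 + 3 * u⁻¹ - u⁻¹ ^ 3 := by nlinarith
    positivity
  rw [div_eq_div_iff (by convert hA using 2; ring) hB]
  field_simp
  ring

theorem beltbuckle_pressure_curvature_positive :
    (∀ x y : ℝ, 0 ≤ x → 0 ≤ y → 0 < Kbb x y) ∧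
    Filter.Tendsto (fun x => Kbb x x) Filter.atTop (nhds (3 / 4)) := by
  constructor
  · intro x y hx hy
    unfold Kbb
    apply div_pos
    · have := exp_pos x; have := exp_pos y
      have := exp_pos (x + y); have := exp_pos (2 * (x + y))
      positivity
    · have h1 : (1:ℝ) ≤ exp (x + y) := one_le_exp (by linarith)
      have h2 : (0:ℝ) < exp (2 * x + y) := exp_pos _
      have h3 : (0:ℝ) < exp (x + 2 * y) := exp_pos _
      have hx1 : (0:ℝ) < exp x := exp_pos x
      have hy1 : (0:ℝ) < exp y := exp_pos y
      have hin : (0:ℝ) < 3 * exp (x + y) + exp (2 * x + y) + exp (x + 2 * y) - 1 := by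
        nlinarith
      positivity
  · have hc : ContinuousAt Fbb 0 := by
      apply ContinuousAt.div (by fun_prop) (by fun_prop)
      norm_num
    have hF0 : Fbb 0 = 3 / 4 := by
      unfold Fbb; norm_num
    have h2 : Filter.Tendsto (fun x : ℝ => Fbb (exp (-x))) Filter.atTop (nhds (3 / 4)) := by
      rw [← hF0]
      exact hc.tendsto.comp Real.tendsto_exp_neg_atTop_nhds_zero
    refine h2.congr' ?_
    filter_upwards [Filter.eventually_ge_atTop (0:ℝ)] with x hx
    exact (Kbb_diag x hx).symm
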